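/- Let k ≥ 3 and let G be a connected k-regular graph of order n and diameter 2 in which every pair of adjacent vertices has at least one common neighbor, and let D be the distance matrix of the bipartite double cover B(G). Let j ∈ ℝ^V be the all-ones vector. Then the vector e₁ = (j, j) ∈ ℝ^{V ⊕ V} satisfies D·e₁ = (-2k + 5n - 2)·e₁, and the vector f₁ = (j, -j) satisfies D·f₁ = (2k - n - 2)·f₁. -/

import Mathlib

open SimpleGraph

/-- The bipartite double cover of a graph `G`, on vertex set `V ⊕ V`. -/
def bipartiteDoubleCover' {V : Type*} (G : SimpleGraph V) : SimpleGraph (V ⊕ V) where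
  Adj x y :=
    match x, y with
    | Sum.inl u, Sum.inr v => G.Adj u v
    | Sum.inr u, Sum.inl v => G.Adj u v
    | _, _ => False
  symm := by
    constructor
    rintro (u | u) (v | v) h
    · exact h.elim
    · exact h.symm
    · exact h.symm
    · exact h.elim
  loopless := by
    constructor
    rintro (u | u) h
    · exact h
    · exact h

/-- The distance matrix of a graph `H`, over the reals. -/
noncomputable def distMatrix {W : Type*} (H : SimpleGraph W) : Matrix W W ℝ :=
  Matrix.of fun x y => (H.dist x y : ℝ)

set_option linter.unusedSectionVars false

section aux
variable {V : Type*} (G : SimpleGraph V)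

lemma bdc_adj_lr {u v : V} : (bipartiteDoubleCover' G).Adj (Sum.inl u) (Sum.inr v) ↔ G.Adj u v := Iff.rfl
lemma bdc_adj_rl {u v : V} : (bipartiteDoubleCover' G).Adj (Sum.inr u) (Sum.inl v) ↔ G.Adj u v := Iff.rfl

lemma bdc_side {x y : V ⊕ V} (h : (bipartiteDoubleCover' G).Adj x y) :
    x.isLeft = !y.isLeft := by
  rcases x with u | u <;> rcases y with v | v <;> simp_all [bipartiteDoubleCover']

lemma bdc_parity {x y : V ⊕ V} (p : (bipartiteDoubleCover' G).Walk x y) :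
    Even p.length ↔ (x.isLeft = y.isLeft) := by
  induction p with
  | nil => simp
  | cons h q ih =>
    have hs := bdc_side G h
    rw [SimpleGraph.Walk.length_cons, Nat.even_add_one, ih, hs]
    rcases Sum.isLeft _ with _|_ <;> rcases Sum.isLeft _ with _|_ <;> simp

end aux


section dists
variable {V : Type*} [Fintype V] (G : SimpleGraph V) [DecidableRel G.Adj] (k : ℕ) (hk : 3 ≤ k)
    (hconn : G.Connected) (hreg : G.IsRegularOfDegree k) (hdiam : G.diam = 2)
    (hcn : ∀ u v : V, G.Adj u v → ∃ x : V, G.Adj u x ∧ G.Adj v x)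

lemma adjLR {u v : V} (h : G.Adj u v) :
    (bipartiteDoubleCover' G).Adj (Sum.inl u) (Sum.inr v) := h

lemma adjRL {u v : V} (h : G.Adj u v) :
    (bipartiteDoubleCover' G).Adj (Sum.inr u) (Sum.inl v) := h

include hconn hdiam in
lemma mid_exists : ∀ u v : V, u ≠ v → ¬ G.Adj u v → ∃ a, G.Adj u a ∧ G.Adj a v := by
  intro u v hne hadj
  have hetop : G.ediam ≠ ⊤ := by
    intro h
    rw [SimpleGraph.diam, h] at hdiam
    simp at hdiam
  have h2 : G.dist u v ≤ 2 := hdiam ▸ SimpleGraph.dist_le_diam hetop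
  have h0 : G.dist u v ≠ 0 := fun h => hne (hconn.dist_eq_zero_iff.mp h)
  have h1 : G.dist u v ≠ 1 := fun h => hadj (SimpleGraph.dist_eq_one_iff_adj.mp h)
  have hd : G.dist u v = 2 := by omega
  obtain ⟨p, hp⟩ := (hconn u v).exists_walk_length_eq_dist
  rw [hd] at hp
  cases p with
  | nil => simp at hp
  | cons h q =>
    cases q with
    | nil => simp at hp
    | cons h' r =>
      cases r with
      | nil => exact ⟨_, h, h'⟩
      | cons h'' s => simp at hp

include hconn hdiam hcn in
lemma mid_exists' : ∀ u v : V, u ≠ v → ∃ a, G.Adj u a ∧ G.Adj a v := by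
  intro u v hne
  by_cases hadj : G.Adj u v
  · obtain ⟨x, hx1, hx2⟩ := hcn u v hadj
    exact ⟨x, hx1, hx2.symm⟩
  · exact mid_exists G hconn hdiam u v hne hadj

include hconn hdiam hcn in
lemma bdc_distLL {u v : V} (h : u ≠ v) :
    (bipartiteDoubleCover' G).dist (Sum.inl u) (Sum.inl v) = 2 := by
  obtain ⟨a, ha1, ha2⟩ := mid_exists' G hconn hdiam hcn u v h
  let p : (bipartiteDoubleCover' G).Walk (Sum.inl u) (Sum.inl v) :=
    SimpleGraph.Walk.cons (adjLR G ha1) (SimpleGraph.Walk.cons (adjRL G ha2) SimpleGraph.Walk.nil)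
  have hle : (bipartiteDoubleCover' G).dist (Sum.inl u) (Sum.inl v) ≤ 2 :=
    SimpleGraph.dist_le p
  have h0 : (bipartiteDoubleCover' G).dist (Sum.inl u) (Sum.inl v) ≠ 0 := by
    intro hz
    have := (SimpleGraph.Reachable.dist_eq_zero_iff ⟨p⟩).mp hz
    simp_all
  have h1 : (bipartiteDoubleCover' G).dist (Sum.inl u) (Sum.inl v) ≠ 1 := by
    intro hz
    exact SimpleGraph.dist_eq_one_iff_adj.mp hz
  omega

include hconn hdiam hcn in
lemma bdc_distRR {u v : V} (h : u ≠ v) :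
    (bipartiteDoubleCover' G).dist (Sum.inr u) (Sum.inr v) = 2 := by
  obtain ⟨a, ha1, ha2⟩ := mid_exists' G hconn hdiam hcn u v h
  let p : (bipartiteDoubleCover' G).Walk (Sum.inr u) (Sum.inr v) :=
    SimpleGraph.Walk.cons (adjRL G ha1) (SimpleGraph.Walk.cons (adjLR G ha2) SimpleGraph.Walk.nil)
  have hle : (bipartiteDoubleCover' G).dist (Sum.inr u) (Sum.inr v) ≤ 2 :=
    SimpleGraph.dist_le p
  have h0 : (bipartiteDoubleCover' G).dist (Sum.inr u) (Sum.inr v) ≠ 0 := by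
    intro hz
    have := (SimpleGraph.Reachable.dist_eq_zero_iff ⟨p⟩).mp hz
    simp_all
  have h1 : (bipartiteDoubleCover' G).dist (Sum.inr u) (Sum.inr v) ≠ 1 := by
    intro hz
    exact SimpleGraph.dist_eq_one_iff_adj.mp hz
  omega

include hk hconn hreg hdiam hcn in
lemma bdc_distLR {u v : V} (h : ¬ G.Adj u v) :
    (bipartiteDoubleCover' G).dist (Sum.inl u) (Sum.inr v) = 3 := by
  have hwalk : ∃ p : (bipartiteDoubleCover' G).Walk (Sum.inl u) (Sum.inr v), p.length = 3 := by
    by_cases huv : u = v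
    · subst huv
      have hdeg : 0 < G.degree u := by rw [hreg u]; omega
      obtain ⟨x, hx⟩ := Finset.card_pos.mp hdeg
      rw [SimpleGraph.mem_neighborFinset] at hx
      obtain ⟨y, hy1, hy2⟩ := hcn u x hx
      exact ⟨SimpleGraph.Walk.cons (adjLR G hx)
        (SimpleGraph.Walk.cons (adjRL G hy2)
          (SimpleGraph.Walk.cons (adjLR G hy1.symm) SimpleGraph.Walk.nil)), rfl⟩
    · obtain ⟨a, ha1, ha2⟩ := mid_exists G hconn hdiam u v huv h
      obtain ⟨b, hb1, hb2⟩ := hcn a v ha2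
      exact ⟨SimpleGraph.Walk.cons (adjLR G ha1)
        (SimpleGraph.Walk.cons (adjRL G hb1)
          (SimpleGraph.Walk.cons (adjLR G hb2.symm) SimpleGraph.Walk.nil)), rfl⟩
  obtain ⟨p, hp⟩ := hwalk
  have hle : (bipartiteDoubleCover' G).dist (Sum.inl u) (Sum.inr v) ≤ 3 := by
    have := SimpleGraph.dist_le p
    omega
  obtain ⟨q, hq⟩ := SimpleGraph.Reachable.exists_walk_length_eq_dist ⟨p⟩
  have hodd : ¬ Even q.length := by
    rw [bdc_parity]
    simp
  rw [hq, Nat.not_even_iff] at hodd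
  have h1 : (bipartiteDoubleCover' G).dist (Sum.inl u) (Sum.inr v) ≠ 1 := by
    intro hz
    have : (bipartiteDoubleCover' G).Adj (Sum.inl u) (Sum.inr v) :=
      SimpleGraph.dist_eq_one_iff_adj.mp hz
    exact h this
  omega

include hk hconn hreg hdiam hcn in
lemma bdc_distRL {u v : V} (h : ¬ G.Adj u v) :
    (bipartiteDoubleCover' G).dist (Sum.inr u) (Sum.inl v) = 3 := by
  rw [SimpleGraph.dist_comm]
  exact bdc_distLR G k hk hconn hreg hdiam hcn (fun hz => h hz.symm)

end dists

theorem stmt10 {V : Type*} [Fintype V] (G : SimpleGraph V)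
    [DecidableRel G.Adj] (k : ℕ) (hk : 3 ≤ k)
    (hconn : G.Connected) (hreg : G.IsRegularOfDegree k) (hdiam : G.diam = 2)
    (hcn : ∀ u v : V, G.Adj u v → ∃ x : V, G.Adj u x ∧ G.Adj v x) :
    (distMatrix (bipartiteDoubleCover' G)).mulVec
        (Sum.elim (fun _ : V => (1 : ℝ)) (fun _ : V => (1 : ℝ))) =
      (-2 * (k : ℝ) + 5 * (Fintype.card V : ℝ) - 2) •
        Sum.elim (fun _ : V => (1 : ℝ)) (fun _ : V => (1 : ℝ)) ∧
    (distMatrix (bipartiteDoubleCover' G)).mulVec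
        (Sum.elim (fun _ : V => (1 : ℝ)) (fun _ : V => (-1 : ℝ))) =
      (2 * (k : ℝ) - (Fintype.card V : ℝ) - 2) •
        Sum.elim (fun _ : V => (1 : ℝ)) (fun _ : V => (-1 : ℝ)) := by
  classical
  set n := Fintype.card V with hn
  -- same-side row sums
  have hsame : ∀ u : V, ∀ f : V → V ⊕ V,
      (∀ v, ((bipartiteDoubleCover' G).dist (f u) (f v) : ℝ) = if u = v then 0 else 2) →
      ∑ v, ((bipartiteDoubleCover' G).dist (f u) (f v) : ℝ) = 2 * n - 2 := by
    intro u f hf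
    have : ∀ v ∈ Finset.univ, ((bipartiteDoubleCover' G).dist (f u) (f v) : ℝ)
        = 2 - (if u = v then (2:ℝ) else 0) := by
      intro v _
      rw [hf v]
      by_cases h : u = v <;> simp [h]
    rw [Finset.sum_congr rfl this, Finset.sum_sub_distrib, Finset.sum_const,
      Finset.sum_ite_eq, if_pos (Finset.mem_univ u)]
    simp [hn]
    ring
  have hLL : ∀ u v : V, ((bipartiteDoubleCover' G).dist (Sum.inl u) (Sum.inl v) : ℝ)
      = if u = v then 0 else 2 := by
    intro u v
    by_cases h : u = v
    · subst h; simp [SimpleGraph.dist_self]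
    · rw [bdc_distLL G hconn hdiam hcn h]; simp [h]
  have hRR : ∀ u v : V, ((bipartiteDoubleCover' G).dist (Sum.inr u) (Sum.inr v) : ℝ)
      = if u = v then 0 else 2 := by
    intro u v
    by_cases h : u = v
    · subst h; simp [SimpleGraph.dist_self]
    · rw [bdc_distRR G hconn hdiam hcn h]; simp [h]
  -- cross row sums
  have hadjsum : ∀ u : V, ∑ v, (if G.Adj u v then (2:ℝ) else 0) = 2 * k := by
    intro u
    rw [← Finset.sum_filter, ← SimpleGraph.neighborFinset_eq_filter, Finset.sum_const]
    have : (G.neighborFinset u).card = k := hreg u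
    rw [this]
    simp [mul_comm]
  have hcross : ∀ u : V, ∀ f g : V → V ⊕ V,
      (∀ v, ((bipartiteDoubleCover' G).dist (f u) (g v) : ℝ) = if G.Adj u v then 1 else 3) →
      ∑ v, ((bipartiteDoubleCover' G).dist (f u) (g v) : ℝ) = 3 * n - 2 * k := by
    intro u f g hf
    have : ∀ v ∈ Finset.univ, ((bipartiteDoubleCover' G).dist (f u) (g v) : ℝ)
        = 3 - (if G.Adj u v then (2:ℝ) else 0) := by
      intro v _
      rw [hf v]
      by_cases h : G.Adj u v <;> simp [h] <;> norm_num
    rw [Finset.sum_congr rfl this, Finset.sum_sub_distrib, Finset.sum_const, hadjsum u]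
    simp [hn]
    ring
  have hLR : ∀ u v : V, ((bipartiteDoubleCover' G).dist (Sum.inl u) (Sum.inr v) : ℝ)
      = if G.Adj u v then 1 else 3 := by
    intro u v
    by_cases h : G.Adj u v
    · rw [SimpleGraph.dist_eq_one_iff_adj.mpr (adjLR G h)]; simp [h]
    · rw [bdc_distLR G k hk hconn hreg hdiam hcn h]; simp [h]
  have hRL : ∀ u v : V, ((bipartiteDoubleCover' G).dist (Sum.inr u) (Sum.inl v) : ℝ)
      = if G.Adj u v then 1 else 3 := by
    intro u v
    by_cases h : G.Adj u v
    · rw [SimpleGraph.dist_eq_one_iff_adj.mpr (adjRL G h)]; simp [h]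
    · rw [bdc_distRL G k hk hconn hreg hdiam hcn h]; simp [h]
  have hrowLL : ∀ u : V, ∑ v, ((bipartiteDoubleCover' G).dist (Sum.inl u) (Sum.inl v) : ℝ)
      = 2 * n - 2 := fun u => hsame u (fun v => Sum.inl v) (hLL u)
  have hrowRR : ∀ u : V, ∑ v, ((bipartiteDoubleCover' G).dist (Sum.inr u) (Sum.inr v) : ℝ)
      = 2 * n - 2 := fun u => hsame u (fun v => Sum.inr v) (hRR u)
  have hrowLR : ∀ u : V, ∑ v, ((bipartiteDoubleCover' G).dist (Sum.inl u) (Sum.inr v) : ℝ)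
      = 3 * n - 2 * k := fun u => hcross u (fun v => Sum.inl v) (fun v => Sum.inr v) (hLR u)
  have hrowRL : ∀ u : V, ∑ v, ((bipartiteDoubleCover' G).dist (Sum.inr u) (Sum.inl v) : ℝ)
      = 3 * n - 2 * k := fun u => hcross u (fun v => Sum.inr v) (fun v => Sum.inl v) (hRL u)
  constructor
  · funext x
    cases x with
    | inl u =>
      simp only [Matrix.mulVec, dotProduct, distMatrix, Matrix.of_apply,
        Sum.elim_inl, Sum.elim_inr, Fintype.sum_sum_type, mul_one,
        Pi.smul_apply, smul_eq_mul]
      rw [hrowLL u, hrowLR u]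
      ring
    | inr u =>
      simp only [Matrix.mulVec, dotProduct, distMatrix, Matrix.of_apply,
        Sum.elim_inl, Sum.elim_inr, Fintype.sum_sum_type, mul_one,
        Pi.smul_apply, smul_eq_mul]
      rw [hrowRR u, hrowRL u]
      ring
  · funext x
    cases x with
    | inl u =>
      simp only [Matrix.mulVec, dotProduct, distMatrix, Matrix.of_apply,
        Sum.elim_inl, Sum.elim_inr, Fintype.sum_sum_type, mul_one, mul_neg_one,
        Pi.smul_apply, smul_eq_mul, Finset.sum_neg_distrib]
      rw [hrowLL u, hrowLR u]
      ring
    | inr u =>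
      simp only [Matrix.mulVec, dotProduct, distMatrix, Matrix.of_apply,
        Sum.elim_inl, Sum.elim_inr, Fintype.sum_sum_type, mul_one, mul_neg_one,
        Pi.smul_apply, smul_eq_mul, Finset.sum_neg_distrib]
      rw [hrowRR u, hrowRL u]
      ring
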